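/- arXiv:2110.08068 — 6 statements merged into one kernel-verified Lean document; each statement's English description precedes it below -/
import Mathlib

section
/- Let P be a PB constraint whose left-hand side splits as ∑_{x_l ∈ X_i} q_l·x_l + R ≤ K, where X_i is a set of its variables and R is the sum of the remaining terms. Let q = min_{x_l ∈ X_i} q_l and suppose q < 0, and let y be a fresh Boolean variable. Then for every assignment A over the variables of P together with y such that at most one variable of X_i is true under A and A makes y true iff all variables of X_i are false: A satisfies ∑_{x_l ∈ X_i} (q_l − q)·x_l + (−q)·y + R ≤ K − q if and only if A satisfies P. (In particular, under the AMO assumption on X_i, the negative-coefficient elimination of the normalisation step preserves the constraint.) -/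
/-!
STATEMENT 5.  Negative-coefficient elimination.  The PB constraint `P` has left-hand
side `∑_{l ∈ S} q_l·x_l + R` where `S` is the index set of the AMO group `X_i`
and `R = ∑_{l ∉ S} q_l·x_l` is the sum of the remaining terms.  Let
`qmin = min_{l ∈ S} q_l < 0` and let `y` be a fresh Boolean variable.  For every
assignment `A` (over the variables of `P` together with `y`) such that at most one
variable of the group is true and `y` is true iff all variables of the group are
false:
`∑_{l ∈ S} (q_l − qmin)·x_l + (−qmin)·y + R ≤ K − qmin` iff `A` satisfies `P`.
-/
theorem stmt5 {V : Type} {n : ℕ} (q : Fin n → ℤ) (x : Fin n → V)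
    (hx : Function.Injective x) (K : ℤ)
    (S : Finset (Fin n)) (hS : S.Nonempty)
    (y : V) (hy : ∀ l, x l ≠ y)
    -- the minimum coefficient in the group is negative:
    (hqneg : S.inf' hS q < 0)
    (A : V → Bool)
    -- at most one variable of the group is true:
    (hamo : (S.filter (fun l => A (x l) = true)).card ≤ 1)
    -- `y ↔ ⋀_{l ∈ S} ¬ x_l`:
    (hydef : A y = true ↔ ∀ l ∈ S, A (x l) = false) :
    ((∑ l ∈ S, if A (x l) then q l - S.inf' hS q else 0) +
        (if A y then -(S.inf' hS q) else 0) +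
        (∑ l ∈ Finset.univ \ S, if A (x l) then q l else 0)
      ≤ K - S.inf' hS q) ↔
    ((∑ l, if A (x l) then q l else 0) ≤ K) := by

  set m := S.inf' hS q with hm
  have hsplit : (∑ l, if A (x l) then q l else 0)
      = (∑ l ∈ S, if A (x l) then q l else 0)
        + (∑ l ∈ Finset.univ \ S, if A (x l) then q l else 0) := by
    rw [← Finset.sum_sdiff (Finset.subset_univ S)]; ring
  by_cases hall : ∀ l ∈ S, A (x l) = false
  · have hy1 : A y = true := hydef.mpr hall
    have h0 : (∑ l ∈ S, if A (x l) then q l - m else 0) = 0 := by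
      apply Finset.sum_eq_zero; intro l hl; simp [hall l hl]
    have h0' : (∑ l ∈ S, if A (x l) then q l else 0) = 0 := by
      apply Finset.sum_eq_zero; intro l hl; simp [hall l hl]
    rw [hsplit, h0, h0', hy1]
    simp only [if_true]
    omega
  · push_neg at hall
    obtain ⟨l₀, hl₀S, hl₀⟩ := hall
    have hl₀t : A (x l₀) = true := by simpa using hl₀
    have hy0 : A y = false := by
      by_contra h
      have := hydef.mp (by simpa using h)
      exact hl₀ (this l₀ hl₀S)
    have hfilter : S.filter (fun l => A (x l) = true) = {l₀} := by
      apply Finset.eq_singleton_iff_unique_mem.mpr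
      constructor
      · exact Finset.mem_filter.mpr ⟨hl₀S, hl₀t⟩
      · intro b hb
        exact Finset.card_le_one.mp hamo b hb l₀ (Finset.mem_filter.mpr ⟨hl₀S, hl₀t⟩)
    have h1 : (∑ l ∈ S, if A (x l) then q l - m else 0) = q l₀ - m := by
      rw [← Finset.sum_filter, hfilter, Finset.sum_singleton]
    have h1' : (∑ l ∈ S, if A (x l) then q l else 0) = q l₀ := by
      rw [← Finset.sum_filter, hfilter, Finset.sum_singleton]
    rw [hsplit, h1, h1', hy0]
    simp only [Bool.false_eq_true, if_false]
    omega
end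

section
/- Let P: ∑ q_l·x_l ≤ K be a PB constraint with an AMO group X_i among its variables, let X'_i ⊆ X_i be a set of variables that all have the same coefficient q ≥ 0 in P, and let y be a fresh variable. Let P' be the PB constraint obtained from P by removing the terms q·x_l for all x_l ∈ X'_i and adding the term q·y, and let F be the conjunction of P' with the clauses ¬x_l ∨ y for all x_l ∈ X'_i. Then for every assignment A over the variables of P in which at most one variable of X_i is true: A satisfies P if and only if A can be extended (by a suitable value for y) to an assignment satisfying F. -/
/-!
STATEMENT 6 (Property 7 normalisation: merging equal coefficients inside a group).
`P : ∑ q_l·x_l ≤ K` has an AMO group with index set `G`; `S ⊆ G` is a set of indices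
whose variables all have the same coefficient `c ≥ 0`; `y` is a fresh variable.
`P'` is obtained from `P` by removing the terms `c·x_l` (`l ∈ S`) and adding the
term `c·y`, and `F` is `P'` together with the clauses `¬x_l ∨ y` (`l ∈ S`).
For every assignment `A` over the variables of `P` in which at most one variable of
the group `G` is true:  `A` satisfies `P` iff `A` can be extended (by a suitable
value `b` for the fresh variable `y`) to an assignment satisfying `F`.
-/
theorem stmt6 {V : Type} [DecidableEq V] {n : ℕ} (q : Fin n → ℤ) (x : Fin n → V)
    (hx : Function.Injective x) (K : ℤ)
    (G S : Finset (Fin n)) (hSG : S ⊆ G)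
    (c : ℤ) (hc : 0 ≤ c) (hcoef : ∀ l ∈ S, q l = c)
    (y : V) (hy : ∀ l, x l ≠ y)
    (A : V → Bool)
    -- at most one variable of the AMO group is true under `A`:
    (hamo : (G.filter (fun l => A (x l) = true)).card ≤ 1) :
    ((∑ l, if A (x l) then q l else 0) ≤ K) ↔
      (∃ b : Bool,
        -- `P'` holds for the extended assignment ...
        ((∑ l ∈ Finset.univ \ S,
            if Function.update A y b (x l) then q l else 0) +
          (if b then c else 0) ≤ K) ∧
        -- ... and so do the clauses `¬x_l ∨ y` for all `l ∈ S`: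
        (∀ l ∈ S, Function.update A y b (x l) = false ∨ b = true)) := by
  classical
  set f : Fin n → ℤ := fun l => if A (x l) then q l else 0 with hf
  have hupd : ∀ (b : Bool) (l : Fin n), Function.update A y b (x l) = A (x l) := by
    intro b l; exact Function.update_of_ne (hy l) _ _
  set T := S.filter (fun l => A (x l) = true) with hTdef
  have hcard : T.card ≤ 1 :=
    le_trans (Finset.card_le_card (Finset.filter_subset_filter _ hSG)) hamo
  have hsplit : ∑ l ∈ Finset.univ \ S, f l + ∑ l ∈ S, f l = ∑ l, f l :=
    Finset.sum_sdiff (Finset.subset_univ S)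
  have hTsum : ∑ l ∈ S, f l = c * T.card := by
    rw [hf]
    rw [← Finset.sum_filter]
    rw [Finset.sum_congr rfl (fun l hl => hcoef l (Finset.mem_filter.mp hl).1)]
    rw [Finset.sum_const, nsmul_eq_mul, mul_comm]
  constructor
  · intro h
    refine ⟨decide T.Nonempty, ?_, ?_⟩
    · have : (if decide T.Nonempty then c else 0) = c * T.card := by
        rcases Nat.le_one_iff_eq_zero_or_eq_one.mp hcard with h0 | h1
        · rw [Finset.card_eq_zero] at h0
          simp [h0]
        · have : T.Nonempty := Finset.card_pos.mp (by omega)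
          simp [this, h1]
      simp only [hupd, this]
      calc ∑ l ∈ Finset.univ \ S, f l + c * T.card
          = ∑ l ∈ Finset.univ \ S, f l + ∑ l ∈ S, f l := by rw [hTsum]
        _ = ∑ l, f l := hsplit
        _ ≤ K := h
    · intro l hl
      rw [hupd]
      by_cases hA : A (x l) = true
      · right
        have : T.Nonempty := ⟨l, Finset.mem_filter.mpr ⟨hl, hA⟩⟩
        simp [this]
      · left; simpa using hA
  · rintro ⟨b, hP', hcl⟩
    have key : c * T.card ≤ (if b then c else 0) := by
      cases b with
      | true =>
        simp only [if_true]
        calc c * T.card ≤ c * 1 := by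
              apply mul_le_mul_of_nonneg_left _ hc
              exact_mod_cast hcard
          _ = c := mul_one c
      | false =>
        have hT0 : T = ∅ := by
          apply Finset.filter_false_of_mem
          intro l hl
          rcases hcl l hl with h | h
          · rw [hupd] at h; simp [h]
          · simp at h
        simp [hT0]
    simp only [hupd] at hP'
    calc ∑ l, f l = ∑ l ∈ Finset.univ \ S, f l + c * T.card := by rw [hTsum] at hsplit; omega
      _ ≤ ∑ l ∈ Finset.univ \ S, f l + (if b then c else 0) := by omega
      _ ≤ K := hP'
end

section
/- Correctness of the Generalized Sequential Weight Counter: let P: ∑ q_l·x_l ≤ K be a PB constraint with integer coefficients 1 ≤ q_l ≤ K and let 𝒳 = {X_1,…,X_N} (N ≥ 2) be a partition of its variables. For every assignment A over the variables of P in which at most one variable of each X_i is true, A can be extended to a satisfying assignment of GSWC(P,𝒳) if and only if ∑ q_l·A(x_l) ≤ K. -/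
/-- A literal is a Boolean variable together with a polarity
(`(v, true)` is the literal `v`, `(v, false)` is `¬v`). -/
abbrev Lit (V : Type) := V × Bool

/-- A clause is a finite disjunction (list) of literals. -/
abbrev Clause (V : Type) := List (Lit V)

/-- A CNF formula is a set of clauses. -/
abbrev CnfForm (V : Type) := Set (Clause V)

/-- Negation of a literal. -/
def negLit {V : Type} (l : Lit V) : Lit V := (l.1, !l.2)

/-- An assignment `B` satisfies a literal. -/
def satLit {V : Type} (B : V → Bool) (l : Lit V) : Prop := B l.1 = l.2

/-- An assignment satisfies a clause if it makes some literal of it true. -/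
def satClause {V : Type} (B : V → Bool) (C : Clause V) : Prop := ∃ l ∈ C, satLit B l

/-- An assignment satisfies a CNF formula if it satisfies all of its clauses. -/
def satCnf {V : Type} (B : V → Bool) (F : CnfForm V) : Prop := ∀ C ∈ F, satClause B C

/-- The set of variables occurring in a CNF formula. -/
def cnfVars {V : Type} (F : CnfForm V) : Set V := {v | ∃ C ∈ F, ∃ b, (v, b) ∈ C}

/-!
The Generalized Sequential Weight Counter.  The PB constraint is
`∑_l q_l · x_l ≤ K` over variables `x l : V` (`l : Fin n`, coefficients
`1 ≤ q l ≤ K`), and the partition `𝒳 = {X_1,…,X_N}` of its variables is given by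
`grp : Fin n → ℕ`: variable `x l` belongs to group `X_{grp l}` (groups are numbered
`1..N`).  The auxiliary counter variables are `s (i, j)` for `1 ≤ i ≤ N-1`,
`1 ≤ j ≤ K`; `s (0, j)` denotes the constant false and never occurs in a clause.
-/
def GSWC {V : Type} (n N K : ℕ) (q : Fin n → ℕ) (grp : Fin n → ℕ)
    (x : Fin n → V) (s : ℕ × ℕ → V) : CnfForm V :=
  {C | -- (i)  ¬s_{i−1,j} ∨ s_{i,j}   for 2 ≤ i < N, 1 ≤ j ≤ K
       (∃ i j : ℕ, 2 ≤ i ∧ i < N ∧ 1 ≤ j ∧ j ≤ K ∧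
          C = [(s (i - 1, j), false), (s (i, j), true)]) ∨
       -- (ii)  ¬x_l ∨ s_{i,j}   for 1 ≤ i < N, x_l ∈ X_i, 1 ≤ j ≤ q_l
       (∃ (l : Fin n) (j : ℕ), 1 ≤ grp l ∧ grp l < N ∧ 1 ≤ j ∧ j ≤ q l ∧
          C = [(x l, false), (s (grp l, j), true)]) ∨
       -- (iii)  ¬s_{i−1,j} ∨ ¬x_l ∨ s_{i,j+q_l}   for 2 ≤ i < N, x_l ∈ X_i, 1 ≤ j ≤ K−q_l
       (∃ (l : Fin n) (j : ℕ), 2 ≤ grp l ∧ grp l < N ∧ 1 ≤ j ∧ j ≤ K - q l ∧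
          C = [(s (grp l - 1, j), false), (x l, false), (s (grp l, j + q l), true)]) ∨
       -- (iv)  ¬s_{i−1,K+1−q_l} ∨ ¬x_l   for 2 ≤ i ≤ N, x_l ∈ X_i
       (∃ l : Fin n, 2 ≤ grp l ∧ grp l ≤ N ∧
          C = [(s (grp l - 1, K + 1 - q l), false), (x l, false)])}

/-!
STATEMENT 7.  Correctness of the Generalized Sequential Weight Counter: for every
assignment `B` of the variables of `P` in which at most one variable of each group
is true, `B` can be extended to a satisfying assignment of `GSWC(P,𝒳)` iff
`∑ q_l · B(x_l) ≤ K`.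
-/
theorem stmt7 {V : Type} (n N K : ℕ) (hN : 2 ≤ N)
    (q : Fin n → ℕ) (hq : ∀ l, 1 ≤ q l ∧ q l ≤ K)
    (x : Fin n → V) (hx : Function.Injective x)
    (s : ℕ × ℕ → V) (hs : Function.Injective s)
    -- the auxiliary variables are fresh:
    (hxs : ∀ l p, x l ≠ s p)
    (grp : Fin n → ℕ)
    -- `𝒳` is a partition of the variables of `P` into groups `X_1, …, X_N`:
    (hgrp : ∀ l, 1 ≤ grp l ∧ grp l ≤ N)
    (hsurj : ∀ i : ℕ, 1 ≤ i → i ≤ N → ∃ l, grp l = i)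
    (B : V → Bool)
    -- at most one variable of each group is true under `B`:
    (hamo : ∀ i : ℕ,
      (Finset.univ.filter (fun l => grp l = i ∧ B (x l) = true)).card ≤ 1) :
    (∃ B' : V → Bool, (∀ l, B' (x l) = B (x l)) ∧
        satCnf B' (GSWC n N K q grp x s)) ↔
      (∑ l, if B (x l) then q l else 0) ≤ K := by
    classical
  -- `S i` = weight of true variables in groups `1..i`; `D i` = weight of group `i`.
  set S : ℕ → ℕ := fun i => ∑ l, if grp l ≤ i ∧ B (x l) = true then q l else 0 with hSdef
  set D : ℕ → ℕ :=
    fun i => ∑ l ∈ Finset.univ.filter (fun l => grp l = i ∧ B (x l) = true), q l with hDdef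
  have hS0 : S 0 = 0 := by
    simp only [hSdef]
    apply Finset.sum_eq_zero
    intro l _
    rw [if_neg]
    rintro ⟨h1, -⟩
    have := (hgrp l).1
    omega
  have hsplit : ∀ i, S (i + 1) = S i + D (i + 1) := by
    intro i
    simp only [hSdef, hDdef, Finset.sum_filter]
    rw [← Finset.sum_add_distrib]
    apply Finset.sum_congr rfl
    intro l _
    by_cases hb : B (x l) = true
    · simp only [hb, and_true]
      split_ifs <;> omega
    · simp [hb]
  have hmono : Monotone S := monotone_nat_of_le_succ (fun i => by rw [hsplit i]; omega)
  have hSN : S N = ∑ l, if B (x l) then q l else 0 := by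
    simp only [hSdef]
    apply Finset.sum_congr rfl
    intro l _
    by_cases hb : B (x l) = true <;> simp [hb, (hgrp l).2]
  have hDq : ∀ i l, grp l = i → B (x l) = true → D i = q l := by
    intro i l h1 h2
    have hmem : l ∈ Finset.univ.filter (fun l => grp l = i ∧ B (x l) = true) := by
      simp [h1, h2]
    have hsub : Finset.univ.filter (fun l => grp l = i ∧ B (x l) = true) = {l} :=
      Finset.eq_singleton_iff_unique_mem.mpr
        ⟨hmem, fun y hy => Finset.card_le_one.mp (hamo i) y hy l hmem⟩
    simp [hDdef, hsub]
  have hDpos : ∀ i, 0 < D i → ∃ l, grp l = i ∧ B (x l) = true := by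
    intro i hpos
    by_contra h
    push_neg at h
    have hemp : Finset.univ.filter (fun l => grp l = i ∧ B (x l) = true) = ∅ := by
      apply Finset.filter_eq_empty_iff.mpr
      rintro l - ⟨h1, h2⟩
      exact h l h1 h2
    rw [hDdef] at hpos
    simp only [hemp, Finset.sum_empty] at hpos
    omega
  have hSq : ∀ l, B (x l) = true → S (grp l - 1) + q l = S (grp l) := by
    intro l hb
    obtain ⟨i, hi⟩ : ∃ i, grp l = i + 1 := ⟨grp l - 1, by have := (hgrp l).1; omega⟩
    rw [hi]
    simp only [Nat.add_sub_cancel]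
    rw [hsplit i, hDq (i + 1) l hi hb]
  constructor
  · -- forward direction
    rintro ⟨B', hBx, hsat⟩
    by_contra hK
    push_neg at hK
    rw [← hSN] at hK
    have claim : ∀ i, i < N → ∀ j, 1 ≤ j → j ≤ K → j ≤ S i → B' (s (i, j)) = true := by
      intro i
      induction i with
      | zero => intro _ j hj _ hjS; rw [hS0] at hjS; omega
      | succ i ih =>
        intro hiN j hj hjK hjS
        by_cases hcase : j ≤ S i
        · rcases Nat.eq_zero_or_pos i with h0 | h1
          · subst h0; rw [hS0] at hcase; omega
          · have hprev := ih (by omega) j hj hjK hcase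
            obtain ⟨lit, hmem, hlit⟩ :=
              hsat [(s (i + 1 - 1, j), false), (s (i + 1, j), true)]
                (Or.inl ⟨i + 1, j, by omega, hiN, hj, hjK, rfl⟩)
            simp only [List.mem_cons, List.not_mem_nil, or_false] at hmem
            rcases hmem with rfl | rfl
            · simp only [satLit, Nat.add_sub_cancel] at hlit
              rw [hprev] at hlit
              exact absurd hlit (by simp)
            · exact hlit
        · push_neg at hcase
          have hD : 0 < D (i + 1) := by have := hsplit i; omega
          obtain ⟨l, hgl, hbl⟩ := hDpos _ hD
          have hql : D (i + 1) = q l := hDq _ l hgl hbl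
          have hjle : j ≤ S i + q l := by have := hsplit i; omega
          have hBxl : B' (x l) = true := by rw [hBx]; exact hbl
          by_cases hjq : j ≤ q l
          · obtain ⟨lit, hmem, hlit⟩ :=
              hsat [(x l, false), (s (grp l, j), true)]
                (Or.inr (Or.inl ⟨l, j, by omega, by omega, hj, hjq, rfl⟩))
            simp only [List.mem_cons, List.not_mem_nil, or_false] at hmem
            rcases hmem with rfl | rfl
            · simp only [satLit] at hlit
              rw [hBxl] at hlit
              exact absurd hlit (by simp)
            · simp only [satLit] at hlit
              rw [hgl] at hlit
              exact hlit
          · push_neg at hjq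
            have hi1 : 1 ≤ i := by
              rcases Nat.eq_zero_or_pos i with h0 | h1
              · exfalso; rw [h0, hS0] at hjle; omega
              · exact h1
            have hprev := ih (by omega) (j - q l) (by omega) (by omega) (by omega)
            obtain ⟨lit, hmem, hlit⟩ :=
              hsat [(s (grp l - 1, j - q l), false), (x l, false),
                    (s (grp l, (j - q l) + q l), true)]
                (Or.inr (Or.inr (Or.inl ⟨l, j - q l, by omega, by omega, by omega,
                  by omega, rfl⟩)))
            simp only [List.mem_cons, List.not_mem_nil, or_false] at hmem
            rcases hmem with rfl | rfl | rfl
            · simp only [satLit] at hlit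
              have hge : grp l - 1 = i := by omega
              rw [hge, hprev] at hlit
              exact absurd hlit (by simp)
            · simp only [satLit] at hlit
              rw [hBxl] at hlit
              exact absurd hlit (by simp)
            · simp only [satLit] at hlit
              have hjj : j - q l + q l = j := by omega
              rw [hgl, hjj] at hlit
              exact hlit
    -- locate the group where the partial sum first exceeds `K`
    have hex : ∃ m, K < S m := ⟨N, hK⟩
    have hmspec : K < S (Nat.find hex) := Nat.find_spec hex
    have hmN : Nat.find hex ≤ N := Nat.find_le hK
    have hm1 : 1 ≤ Nat.find hex := by
      rcases Nat.eq_zero_or_pos (Nat.find hex) with h0 | h1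
      · rw [h0, hS0] at hmspec; omega
      · exact h1
    obtain ⟨i, hieq⟩ : ∃ i, Nat.find hex = i + 1 := ⟨Nat.find hex - 1, by omega⟩
    have hSiK : S i ≤ K := by
      have := Nat.find_min hex (show i < Nat.find hex by omega)
      omega
    rw [hieq] at hmspec
    have hD : 0 < D (i + 1) := by have := hsplit i; omega
    obtain ⟨l, hgl, hbl⟩ := hDpos _ hD
    have hql : D (i + 1) = q l := hDq _ l hgl hbl
    have hK1 : K + 1 - q l ≤ S i := by have := hsplit i; omega
    have hi1 : 1 ≤ i := by
      rcases Nat.eq_zero_or_pos i with h0 | h1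
      · exfalso
        subst h0
        have h1 := hsplit 0
        rw [hS0] at h1
        have := (hq l).2
        omega
      · exact h1
    have hBxl : B' (x l) = true := by rw [hBx]; exact hbl
    have hclaim := claim i (by omega) (K + 1 - q l)
      (by have := (hq l).2; omega) (by have := (hq l).1; omega) hK1
    obtain ⟨lit, hmem, hlit⟩ :=
      hsat [(s (grp l - 1, K + 1 - q l), false), (x l, false)]
        (Or.inr (Or.inr (Or.inr ⟨l, by omega, by omega, rfl⟩)))
    simp only [List.mem_cons, List.not_mem_nil, or_false] at hmem
    rcases hmem with rfl | rfl
    · simp only [satLit] at hlit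
      have hge : grp l - 1 = i := by omega
      rw [hge, hclaim] at hlit
      exact absurd hlit (by simp)
    · simp only [satLit] at hlit
      rw [hBxl] at hlit
      exact absurd hlit (by simp)
  · -- backward direction: construct the extension
    intro hK
    rw [← hSN] at hK
    set B' : V → Bool := fun v =>
      if ∃ l, x l = v then B v
      else if ∃ p : ℕ × ℕ, s p = v ∧ p.2 ≤ S p.1 then true else false with hB'def
    have hBx : ∀ l, B' (x l) = B (x l) := by
      intro l
      simp only [hB'def]
      rw [if_pos ⟨l, rfl⟩]
    have hBs : ∀ i j : ℕ, B' (s (i, j)) = true ↔ j ≤ S i := by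
      intro i j
      simp only [hB'def]
      rw [if_neg (by rintro ⟨l, hl⟩; exact hxs l (i, j) hl)]
      constructor
      · intro h
        by_cases hc : ∃ p : ℕ × ℕ, s p = s (i, j) ∧ p.2 ≤ S p.1
        · obtain ⟨p, hp1, hp2⟩ := hc
          have hpe : p = (i, j) := hs hp1
          rw [hpe] at hp2
          exact hp2
        · rw [if_neg hc] at h
          exact absurd h (by simp)
      · intro h
        rw [if_pos ⟨(i, j), rfl, h⟩]
    have hBsF : ∀ i j : ℕ, ¬ j ≤ S i → B' (s (i, j)) = false := fun i j h =>
      Bool.eq_false_iff.mpr (fun ht => h ((hBs i j).mp ht))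
    have hBxF : ∀ l : Fin n, ¬ B (x l) = true → B' (x l) = false := fun l h => by
      rw [hBx]; exact Bool.eq_false_iff.mpr h
    refine ⟨B', hBx, ?_⟩
    rintro C (⟨i, j, hi2, hiN, hj1, hjK, rfl⟩ | ⟨l, j, hg1, hgN, hj1, hjq, rfl⟩ |
      ⟨l, j, hg2, hgN, hj1, hjK, rfl⟩ | ⟨l, hg2, hgN, rfl⟩)
    · -- clause (i)
      by_cases h : j ≤ S (i - 1)
      · exact ⟨(s (i, j), true), by simp, (hBs i j).mpr (le_trans h (hmono (by omega)))⟩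
      · exact ⟨(s (i - 1, j), false), by simp, hBsF _ _ h⟩
    · -- clause (ii)
      by_cases hb : B (x l) = true
      · have hqS : q l ≤ S (grp l) := by have := hSq l hb; omega
        exact ⟨(s (grp l, j), true), by simp, (hBs _ _).mpr (le_trans hjq hqS)⟩
      · exact ⟨(x l, false), by simp, hBxF l hb⟩
    · -- clause (iii)
      by_cases hb : B (x l) = true
      · by_cases hjs : j ≤ S (grp l - 1)
        · refine ⟨(s (grp l, j + q l), true), by simp, (hBs _ _).mpr ?_⟩
          have := hSq l hb
          omega
        · exact ⟨(s (grp l - 1, j), false), by simp, hBsF _ _ hjs⟩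
      · exact ⟨(x l, false), by simp, hBxF l hb⟩
    · -- clause (iv)
      by_cases hb : B (x l) = true
      · refine ⟨(s (grp l - 1, K + 1 - q l), false), by simp, hBsF _ _ ?_⟩
        have h1 := hSq l hb
        have h2 : S (grp l) ≤ K := le_trans (hmono hgN) hK
        have := hq l
        omega
      · exact ⟨(x l, false), by simp, hBxF l hb⟩
end

section
/- Let 𝒫 = P ∧ M_1 ∧ ⋯ ∧ M_N be a PB(AMO) constraint with P of the form ∑_{i=1}^n q_i·x_i ≤ K and all q_i ≥ 0. Let E be a GAC (respectively CC) encoding of P, and let H be a GAC (respectively CC) encoding of M_1 ∧ ⋯ ∧ M_N, with auxiliary variables disjoint from those of E. Then the conjunction E ∧ H is a GAC (respectively CC) encoding of 𝒫. -/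
/-- A partial assignment (a set of literals) is consistent if it contains no
complementary pair of literals. -/
def PAConsistent {V : Type} (A : Set (Lit V)) : Prop :=
  ∀ v : V, ¬ ((v, true) ∈ A ∧ (v, false) ∈ A)

/-- A total assignment `B` extends a partial assignment `A`. -/
def ExtendsPA {V : Type} (A : Set (Lit V)) (B : V → Bool) : Prop := ∀ l ∈ A, B l.1 = l.2

/-- A partial assignment mentions only variables in the set `S`. -/
def OverScope {V : Type} (A : Set (Lit V)) (S : Set V) : Prop := ∀ l ∈ A, l.1 ∈ S

/-- Unit propagation closure: the least set of literals containing `A` and closed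
under the rule: if all literals of some clause of `F` except one are complemented
in the set, the remaining literal is added. -/
inductive UP {V : Type} (F : CnfForm V) (A : Set (Lit V)) : Lit V → Prop where
  | base {l : Lit V} : l ∈ A → UP F A l
  | unit {C : Clause V} {l : Lit V} : C ∈ F → l ∈ C →
      (∀ l' ∈ C, l' ≠ l → UP F A (negLit l')) → UP F A l

/-- Unit propagation of `A` on `F` falsifies some clause: some clause of `F` has all
of its literals complemented in the closure. -/
def UPFalsifies {V : Type} (F : CnfForm V) (A : Set (Lit V)) : Prop :=
  ∃ C ∈ F, ∀ l ∈ C, UP F A (negLit l)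

/-- `F` is an encoding of the Boolean function `sat` (whose variables are `scope`):
an assignment of the variables of the constraint satisfies it iff it can be extended
to a satisfying assignment of `F`. -/
def IsEncoding {V : Type} (F : CnfForm V) (scope : Set V) (sat : (V → Bool) → Prop) : Prop :=
  ∀ B : V → Bool, sat B ↔ ∃ B' : V → Bool, (∀ v ∈ scope, B' v = B v) ∧ satCnf B' F

/-- `F` is a consistency-checking (CC) encoding of the constraint `sat` with scope `scope`. -/
def IsCC {V : Type} (F : CnfForm V) (scope : Set V) (sat : (V → Bool) → Prop) : Prop :=
  IsEncoding F scope sat ∧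
  ∀ A : Set (Lit V), PAConsistent A → OverScope A scope →
    (¬ ∃ B : V → Bool, ExtendsPA A B ∧ sat B) → UPFalsifies F A

/-- `F` is a generalized arc consistent (GAC) encoding of the constraint `sat`:
whenever a variable of the constraint takes the same value `b` in every extension of a
partial assignment `A` satisfying the constraint, unit propagating `A` on `F` adds the
corresponding literal. -/
def IsGAC {V : Type} (F : CnfForm V) (scope : Set V) (sat : (V → Bool) → Prop) : Prop :=
  IsEncoding F scope sat ∧
  ∀ A : Set (Lit V), PAConsistent A → OverScope A scope →
    ∀ v ∈ scope, ∀ b : Bool,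
      (∀ B : V → Bool, ExtendsPA A B → sat B → B v = b) → UP F A (v, b)


lemma up_mono {V : Type} {F F' : CnfForm V} (h : F ⊆ F') {A : Set (Lit V)} {l : Lit V}
    (hu : UP F A l) : UP F' A l := by
  induction hu with
  | base h' => exact UP.base h'
  | unit hC hl _ ih => exact UP.unit (h hC) hl ih

lemma upfals_mono {V : Type} {F F' : CnfForm V} (h : F ⊆ F') {A : Set (Lit V)}
    (hu : UPFalsifies F A) : UPFalsifies F' A := by
  obtain ⟨C, hC, hall⟩ := hu
  exact ⟨C, h hC, fun l hl => up_mono h (hall l hl)⟩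

lemma encoding_union {V : Type} (E H : CnfForm V) (scope : Set V)
    (satE satH : (V → Bool) → Prop)
    (hdisj : ∀ v, v ∈ cnfVars E → v ∈ cnfVars H → v ∈ scope)
    (hE : IsEncoding E scope satE) (hH : IsEncoding H scope satH) :
    IsEncoding (E ∪ H) scope (fun B => satE B ∧ satH B) := by
  intro B
  constructor
  · rintro ⟨hsE, hsH⟩
    obtain ⟨B1, hB1, hB1E⟩ := (hE B).1 hsE
    obtain ⟨B2, hB2, hB2H⟩ := (hH B).1 hsH
    classical
    refine ⟨fun v => if v ∈ cnfVars E then B1 v else if v ∈ cnfVars H then B2 v else B v,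
      ?_, ?_⟩
    · intro v hv
      by_cases h1 : v ∈ cnfVars E
      · simp [h1, hB1 v hv]
      · by_cases h2 : v ∈ cnfVars H <;> simp [h1, h2, hB2 v hv]
    · rintro C (hC | hC)
      · obtain ⟨l, hlC, hl⟩ := hB1E C hC
        refine ⟨l, hlC, ?_⟩
        have hvE : l.1 ∈ cnfVars E := ⟨C, hC, l.2, by simpa using hlC⟩
        simpa [satLit, hvE] using hl
      · obtain ⟨l, hlC, hl⟩ := hB2H C hC
        refine ⟨l, hlC, ?_⟩
        have hvH : l.1 ∈ cnfVars H := ⟨C, hC, l.2, by simpa using hlC⟩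
        by_cases hvE : l.1 ∈ cnfVars E
        · have hsc : l.1 ∈ scope := hdisj l.1 hvE hvH
          have : B1 l.1 = B2 l.1 := by rw [hB1 l.1 hsc, hB2 l.1 hsc]
          simpa [satLit, hvE, this] using hl
        · simpa [satLit, hvE, hvH] using hl
  · rintro ⟨B', hB', hs⟩
    exact ⟨(hE B).2 ⟨B', hB', fun C hC => hs C (Or.inl hC)⟩,
           (hH B).2 ⟨B', hB', fun C hC => hs C (Or.inr hC)⟩⟩

/-!
STATEMENT 9.  Let `𝒫 = P ∧ M_1 ∧ ⋯ ∧ M_N` be a PB(AMO) constraint with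
`P : ∑ qᵢ·xᵢ ≤ K`, all `qᵢ ≥ 0`, and partition `X` of the indices of the variables
(`X i` is the index set of the scope of `M_i`).  If `E` is a GAC (respectively CC)
encoding of `P` and `H` is a GAC (respectively CC) encoding of `M_1 ∧ ⋯ ∧ M_N`,
with auxiliary variables disjoint from those of `E`, then `E ∧ H` is a GAC
(respectively CC) encoding of `𝒫`.
-/
theorem stmt9 {V : Type} {n N : ℕ} (q : Fin n → ℤ) (hq : ∀ i, 0 ≤ q i)
    (x : Fin n → V) (hx : Function.Injective x) (K : ℤ)
    (X : Fin N → Finset (Fin n))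
    (hne : ∀ i, (X i).Nonempty)
    (hdisj : ∀ i j, i ≠ j → Disjoint (X i) (X j))
    (hcover : ∀ l, ∃ i, l ∈ X i)
    (E H : CnfForm V)
    -- the auxiliary variables of `E` and `H` are disjoint:
    (hauxdisj : ∀ v, v ∈ cnfVars E → v ∈ cnfVars H → v ∈ Set.range x) :
    -- GAC case:
    ((IsGAC E (Set.range x) (fun B => (∑ l, if B (x l) then q l else 0) ≤ K) ∧
      IsGAC H (Set.range x)
        (fun B => ∀ i, ((X i).filter (fun l => B (x l) = true)).card ≤ 1)) →
      IsGAC (E ∪ H) (Set.range x)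
        (fun B => ((∑ l, if B (x l) then q l else 0) ≤ K) ∧
          ∀ i, ((X i).filter (fun l => B (x l) = true)).card ≤ 1)) ∧
    -- CC case:
    ((IsCC E (Set.range x) (fun B => (∑ l, if B (x l) then q l else 0) ≤ K) ∧
      IsCC H (Set.range x)
        (fun B => ∀ i, ((X i).filter (fun l => B (x l) = true)).card ≤ 1)) →
      IsCC (E ∪ H) (Set.range x)
        (fun B => ((∑ l, if B (x l) then q l else 0) ≤ K) ∧
          ∀ i, ((X i).filter (fun l => B (x l) = true)).card ≤ 1)) := by
  classical
  set satP : (V → Bool) → Prop := fun B => (∑ l, if B (x l) then q l else 0) ≤ K with hsatP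
  set satM : (V → Bool) → Prop :=
    fun B => ∀ i, ((X i).filter (fun l => B (x l) = true)).card ≤ 1 with hsatM
  -- the meet of an assignment satisfying M and one satisfying P satisfies both
  have hmeetP : ∀ B₁ B₂ : V → Bool, satP B₂ → satP (fun u => B₁ u && B₂ u) := by
    intro B₁ B₂ h2
    refine le_trans (Finset.sum_le_sum ?_) h2
    intro l _
    by_cases hb2 : B₂ (x l) = true <;> by_cases hb1 : B₁ (x l) = true <;>
      simp [hb1, hb2, hq l]
  have hmeetM : ∀ B₁ B₂ : V → Bool, satM B₁ → satM (fun u => B₁ u && B₂ u) := by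
    intro B₁ B₂ h1 i
    refine le_trans (Finset.card_le_card ?_) (h1 i)
    intro l hl
    simp only [Finset.mem_filter, Bool.and_eq_true] at hl ⊢
    exact ⟨hl.1, hl.2.1⟩
  have hmeetExt : ∀ (A : Set (Lit V)) (B₁ B₂ : V → Bool), ExtendsPA A B₁ → ExtendsPA A B₂ →
      ExtendsPA A (fun u => B₁ u && B₂ u) := by
    intro A B₁ B₂ h1 h2 l hl
    have e1 := h1 l hl
    have e2 := h2 l hl
    simp only
    rw [e1, e2, Bool.and_self]
  constructor
  · rintro ⟨⟨hEenc, hEgac⟩, ⟨hHenc, hHgac⟩⟩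
    refine ⟨encoding_union E H (Set.range x) satP satM hauxdisj hEenc hHenc, ?_⟩
    intro A hcons hscope v hv b hforced
    by_cases hMf : ∀ B : V → Bool, ExtendsPA A B → satM B → B v = b
    · exact up_mono Set.subset_union_right (hHgac A hcons hscope v hv b hMf)
    · push_neg at hMf
      obtain ⟨B₁, hB₁A, hB₁M, hB₁v⟩ := hMf
      have hPf : ∀ B : V → Bool, ExtendsPA A B → satP B → B v = b := by
        intro B₂ hB₂A hB₂P
        by_contra hB₂v
        have hB := hforced (fun u => B₁ u && B₂ u) (hmeetExt A B₁ B₂ hB₁A hB₂A)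
          ⟨hmeetP B₁ B₂ hB₂P, hmeetM B₁ B₂ hB₁M⟩
        have hB' : (B₁ v && B₂ v) = b := hB
        clear hB hforced
        revert hB' hB₁v hB₂v
        cases b <;> cases h1 : B₁ v <;> cases h2 : B₂ v <;> simp
      exact up_mono Set.subset_union_left (hEgac A hcons hscope v hv b hPf)
  · rintro ⟨⟨hEenc, hEcc⟩, ⟨hHenc, hHcc⟩⟩
    refine ⟨encoding_union E H (Set.range x) satP satM hauxdisj hEenc hHenc, ?_⟩
    intro A hcons hscope hno
    by_cases hMe : ∃ B : V → Bool, ExtendsPA A B ∧ satM B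
    · obtain ⟨B₁, hB₁A, hB₁M⟩ := hMe
      have hPe : ¬ ∃ B : V → Bool, ExtendsPA A B ∧ satP B := by
        rintro ⟨B₂, hB₂A, hB₂P⟩
        exact hno ⟨fun u => B₁ u && B₂ u, hmeetExt A B₁ B₂ hB₁A hB₂A,
          hmeetP B₁ B₂ hB₂P, hmeetM B₁ B₂ hB₁M⟩
      exact upfals_mono Set.subset_union_left (hEcc A hcons hscope hPe)
    · exact upfals_mono Set.subset_union_right (hHcc A hcons hscope hMe)
end

section
/- Correctness of the Generalized Generalized Totalizer: let P: ∑ q_l·x_l ≤ K be a PB constraint with 1 ≤ q_l ≤ K and partition 𝒳 = {X_1,…,X_N} of its variables in which distinct variables of the same group have distinct coefficients, and let any binary tree with one leaf per group be fixed. For every assignment A over the variables of P in which at most one variable of each X_i is true, A can be extended to a satisfying assignment of the GGT encoding if and only if ∑ q_l·A(x_l) ≤ K. -/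
/-- A binary tree with one leaf per group of the partition (groups `i : Fin N`). -/
inductive PBTree (N : ℕ) : Type where
  | leaf : Fin N → PBTree N
  | node : PBTree N → PBTree N → PBTree N

/-- The list of leaves of a tree. -/
def PBTree.leavesOf {N : ℕ} : PBTree N → List (Fin N)
  | .leaf i => [i]
  | .node L R => L.leavesOf ++ R.leavesOf

/-- The subtree at a given path (`false` = left child, `true` = right child). -/
def subtreeAt {N : ℕ} : List Bool → PBTree N → Option (PBTree N)
  | [], t => some t
  | _ :: _, .leaf _ => none
  | b :: p, .node L R => subtreeAt p (if b then R else L)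

/-- The attribute `vals` of a node: for the leaf of group `X_i` it is
`{0} ∪ {q_l : grp l = i}`, and for a non-leaf node it is the set of sums of values
of the two children, capped at `K+1`. -/
def ggtVals {n N : ℕ} (q : Fin n → ℕ) (grp : Fin n → Fin N) (K : ℕ) :
    PBTree N → Finset ℕ
  | .leaf i => insert 0 ((Finset.univ.filter (fun l => grp l = i)).image q)
  | .node L R =>
      ((ggtVals q grp K L) ×ˢ (ggtVals q grp K R)).image
        (fun w => min (w.1 + w.2) (K + 1))

/-- SAT variables of the GGT encoding: the input variables `Sum.inl l` of the PB
constraint, and one auxiliary variable `Sum.inr (p, w)` for each nonzero value `w`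
of the non-leaf node at path `p` of the tree. -/
abbrev GGTVar (n : ℕ) := Fin n ⊕ (List Bool × ℕ)

/-- `isVarAt q grp K t p w v` holds iff `v` is the Boolean variable `o_w`
representing the nonzero value `w` of the node of the tree `t` at path `p`:
at the leaf of group `X_i` it is the input variable `x_l` itself for the (unique)
`l` with `grp l = i` and `q l = w`; at a non-leaf node it is the auxiliary variable
`Sum.inr (p, w)`. -/
def isVarAt {n N : ℕ} (q : Fin n → ℕ) (grp : Fin n → Fin N) (K : ℕ)
    (t : PBTree N) (p : List Bool) (w : ℕ) (v : GGTVar n) : Prop :=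
  match subtreeAt p t with
  | some (.leaf i) => w ≠ 0 ∧ ∃ l : Fin n, grp l = i ∧ q l = w ∧ v = Sum.inl l
  | some (.node L R) =>
      w ≠ 0 ∧ w ∈ ggtVals q grp K (.node L R) ∧ v = Sum.inr (p, w)
  | none => False

/-- The clauses of the Generalized Generalized Totalizer encoding. -/
def GGTclauses {n N : ℕ} (q : Fin n → ℕ) (grp : Fin n → Fin N) (K : ℕ)
    (t : PBTree N) : CnfForm (GGTVar n) :=
  {C | -- ¬t_w ∨ o_w for each variable t_w of a child of the non-leaf node O:
       (∃ (p : List Bool) (sdir : Bool) (w : ℕ) (tv ov : GGTVar n)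
          (L R : PBTree N),
          subtreeAt p t = some (.node L R) ∧
          isVarAt q grp K t (p ++ [sdir]) w tv ∧
          isVarAt q grp K t p w ov ∧
          C = [(tv, false), (ov, true)]) ∨
       -- ¬l_{w₁} ∨ ¬r_{w₂} ∨ o_w, w = min(w₁+w₂, K+1):
       (∃ (p : List Bool) (w₁ w₂ : ℕ) (lv rv ov : GGTVar n) (L R : PBTree N),
          subtreeAt p t = some (.node L R) ∧
          isVarAt q grp K t (p ++ [false]) w₁ lv ∧
          isVarAt q grp K t (p ++ [true]) w₂ rv ∧
          isVarAt q grp K t p (min (w₁ + w₂) (K + 1)) ov ∧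
          C = [(lv, false), (rv, false), (ov, true)]) ∨
       -- the unit clause ¬a_{K+1} at the root whenever K+1 ∈ A.vals:
       (∃ rv : GGTVar n, K + 1 ∈ ggtVals q grp K t ∧
          isVarAt q grp K t [] (K + 1) rv ∧ C = [(rv, false)])}

/-!
STATEMENT 17.  Correctness of the Generalized Generalized Totalizer:
`P : ∑ q_l·x_l ≤ K` with `1 ≤ q_l ≤ K`, partition given by `grp : Fin n → Fin N`
in which distinct variables of the same group have distinct coefficients, and any
fixed binary tree `t` with one leaf per group.  For every assignment `B` of the
variables of `P` in which at most one variable of each group is true, `B` can be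
extended to a satisfying assignment of the GGT encoding iff `∑ q_l·B(x_l) ≤ K`.
(The variables of `P` are represented by `Sum.inl l`.)
-/

section GGTAux

variable {n N : ℕ}

/-- Value contributed by group `i` under assignment `B`. -/
def gval (q : Fin n → ℕ) (grp : Fin n → Fin N) (B : Fin n → Bool) (i : Fin N) : ℕ :=
  ∑ l ∈ Finset.univ.filter (fun l => grp l = i), (if B l then q l else 0)

/-- Value of a subtree under assignment `B`. -/
def tval (q : Fin n → ℕ) (grp : Fin n → Fin N) (B : Fin n → Bool) : PBTree N → ℕ
  | .leaf i => gval q grp B i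
  | .node L R => tval q grp B L + tval q grp B R

lemma subtreeAt_append {t : PBTree N} {p : List Bool} {L R : PBTree N}
    (hp : subtreeAt p t = some (.node L R)) (b : Bool) :
    subtreeAt (p ++ [b]) t = some (if b then R else L) := by
  induction p generalizing t with
  | nil =>
    simp only [subtreeAt, Option.some.injEq] at hp
    subst hp
    cases b <;> rfl
  | cons c p ih =>
    cases t with
    | leaf i => simp [subtreeAt] at hp
    | node L' R' =>
      simp only [subtreeAt] at hp ⊢
      exact ih hp

lemma isVarAt_leaf {q : Fin n → ℕ} {grp : Fin n → Fin N} {K : ℕ} {t : PBTree N}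
    {p : List Bool} {i : Fin N} (hp : subtreeAt p t = some (.leaf i)) (w : ℕ) (v : GGTVar n) :
    isVarAt q grp K t p w v ↔ (w ≠ 0 ∧ ∃ l : Fin n, grp l = i ∧ q l = w ∧ v = Sum.inl l) := by
  unfold isVarAt
  rw [hp]

lemma isVarAt_node {q : Fin n → ℕ} {grp : Fin n → Fin N} {K : ℕ} {t : PBTree N}
    {p : List Bool} {L R : PBTree N} (hp : subtreeAt p t = some (.node L R)) (w : ℕ)
    (v : GGTVar n) :
    isVarAt q grp K t p w v ↔
      (w ≠ 0 ∧ w ∈ ggtVals q grp K (.node L R) ∧ v = Sum.inr (p, w)) := by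
  unfold isVarAt
  rw [hp]

lemma gval_eq_filter (q : Fin n → ℕ) (grp : Fin n → Fin N) (B : Fin n → Bool) (i : Fin N) :
    gval q grp B i = ∑ l ∈ Finset.univ.filter (fun l => grp l = i ∧ B l = true), q l := by
  rw [gval, Finset.sum_filter, Finset.sum_filter]
  apply Finset.sum_congr rfl
  intro x _
  by_cases h1 : grp x = i <;> by_cases h2 : B x <;> simp [h1, h2]

lemma gval_true (q : Fin n → ℕ) (grp : Fin n → Fin N) (B : Fin n → Bool)
    (hamo : ∀ i : Fin N,
      (Finset.univ.filter (fun l => grp l = i ∧ B l = true)).card ≤ 1)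
    {l : Fin n} (hl : B l = true) : gval q grp B (grp l) = q l := by
  rw [gval_eq_filter]
  have hmem : l ∈ Finset.univ.filter (fun l' => grp l' = grp l ∧ B l' = true) := by
    simp [hl]
  have hs : Finset.univ.filter (fun l' => grp l' = grp l ∧ B l' = true) = {l} :=
    Finset.eq_singleton_iff_unique_mem.mpr
      ⟨hmem, fun x hx => Finset.card_le_one.mp (hamo (grp l)) x hx l hmem⟩
  rw [hs, Finset.sum_singleton]

lemma gval_exists (q : Fin n → ℕ) (grp : Fin n → Fin N) (B : Fin n → Bool)
    (hamo : ∀ i : Fin N,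
      (Finset.univ.filter (fun l => grp l = i ∧ B l = true)).card ≤ 1)
    {i : Fin N} (h : gval q grp B i ≠ 0) :
    ∃ l, grp l = i ∧ B l = true ∧ gval q grp B i = q l := by
  rw [gval_eq_filter] at h
  have hne : (Finset.univ.filter (fun l => grp l = i ∧ B l = true)).Nonempty := by
    by_contra hne
    rw [Finset.not_nonempty_iff_eq_empty] at hne
    simp [hne] at h
  obtain ⟨l, hl⟩ := hne
  simp only [Finset.mem_filter, Finset.mem_univ, true_and] at hl
  refine ⟨l, hl.1, hl.2, ?_⟩
  rw [← hl.1]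
  exact gval_true q grp B hamo hl.2

lemma zero_mem_ggtVals (q : Fin n → ℕ) (grp : Fin n → Fin N) (K : ℕ) :
    ∀ T : PBTree N, 0 ∈ ggtVals q grp K T
  | .leaf i => by simp [ggtVals]
  | .node L R => by
      simp only [ggtVals, Finset.mem_image]
      exact ⟨(0, 0), Finset.mem_product.mpr
        ⟨zero_mem_ggtVals q grp K L, zero_mem_ggtVals q grp K R⟩, by simp⟩

lemma cval_mem (q : Fin n → ℕ) (grp : Fin n → Fin N) (B : Fin n → Bool) (K : ℕ)
    (hq : ∀ l, 1 ≤ q l ∧ q l ≤ K)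
    (hamo : ∀ i : Fin N,
      (Finset.univ.filter (fun l => grp l = i ∧ B l = true)).card ≤ 1) :
    ∀ T : PBTree N, min (tval q grp B T) (K + 1) ∈ ggtVals q grp K T
  | .leaf i => by
      by_cases h : gval q grp B i = 0
      · simp [ggtVals, tval, h]
      · obtain ⟨l, hgl, hBl, hgv⟩ := gval_exists q grp B hamo h
        have hlK := (hq l).2
        have hmin : min (tval q grp B (.leaf i)) (K + 1) = q l := by
          simp only [tval, hgv]; omega
        rw [hmin]
        simp only [ggtVals, Finset.mem_insert, Finset.mem_image]
        exact Or.inr ⟨l, by simp [hgl], rfl⟩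
  | .node L R => by
      simp only [ggtVals, Finset.mem_image]
      refine ⟨(min (tval q grp B L) (K + 1), min (tval q grp B R) (K + 1)),
        Finset.mem_product.mpr
          ⟨cval_mem q grp B K hq hamo L, cval_mem q grp B K hq hamo R⟩, ?_⟩
      simp only [tval]
      omega

lemma tval_map (q : Fin n → ℕ) (grp : Fin n → Fin N) (B : Fin n → Bool) :
    ∀ T : PBTree N, tval q grp B T = (T.leavesOf.map (gval q grp B)).sum
  | .leaf i => rfl
  | .node L R => by
      simp [tval, PBTree.leavesOf, tval_map q grp B L, tval_map q grp B R]

/-- The canonical extension of `B` to the GGT variables. -/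
def ggtAssign (q : Fin n → ℕ) (grp : Fin n → Fin N) (B : Fin n → Bool) (K : ℕ)
    (t : PBTree N) : GGTVar n → Bool
  | Sum.inl l => B l
  | Sum.inr (p, w) =>
    match subtreeAt p t with
    | some T => decide (w ≤ min (tval q grp B T) (K + 1))
    | none => false

end GGTAux

theorem stmt17 {n N : ℕ} (q : Fin n → ℕ) (K : ℕ) (hq : ∀ l, 1 ≤ q l ∧ q l ≤ K)
    (grp : Fin n → Fin N)
    -- distinct variables of the same group have distinct coefficients:
    (hdistinct : ∀ l l', grp l = grp l' → q l = q l' → l = l')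
    (t : PBTree N)
    -- the tree has exactly one leaf per group:
    (ht : t.leavesOf.Nodup ∧ ∀ i : Fin N, i ∈ t.leavesOf)
    (B : Fin n → Bool)
    -- at most one variable of each group is true under `B`:
    (hamo : ∀ i : Fin N,
      (Finset.univ.filter (fun l => grp l = i ∧ B l = true)).card ≤ 1) :
    (∃ B' : GGTVar n → Bool, (∀ l, B' (Sum.inl l) = B l) ∧
        satCnf B' (GGTclauses q grp K t)) ↔
      (∑ l, if B l then q l else 0) ≤ K := by
  have htval : tval q grp B t = ∑ l, if B l then q l else 0 := by
    rw [tval_map, ← List.sum_toFinset _ ht.1]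
    have huniv : t.leavesOf.toFinset = Finset.univ := by
      apply Finset.eq_univ_iff_forall.mpr
      intro i
      simpa using ht.2 i
    rw [huniv,
      ← Finset.sum_fiberwise Finset.univ grp (fun l => if B l then q l else 0)]
    apply Finset.sum_congr rfl
    intro i _
    rw [gval]
  constructor
  · rintro ⟨B', hB'l, hsat⟩
    by_contra hK
    push_neg at hK
    have main : ∀ (T : PBTree N) (p : List Bool), subtreeAt p t = some T →
        tval q grp B T ≠ 0 →
        ∃ v, isVarAt q grp K t p (min (tval q grp B T) (K + 1)) v ∧ B' v = true := by
      intro T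
      induction T with
      | leaf i =>
        intro p hp hne
        obtain ⟨l, hgl, hBl, hgv⟩ := gval_exists q grp B hamo hne
        refine ⟨Sum.inl l, ?_, by rw [hB'l]; exact hBl⟩
        have hmin : min (tval q grp B (.leaf i)) (K + 1) = q l := by
          have := (hq l).2
          simp only [tval, hgv]; omega
        rw [hmin, isVarAt_leaf hp]
        exact ⟨by have := (hq l).1; omega, l, hgl, rfl, rfl⟩
      | node L R ihL ihR =>
        intro p hp hne
        have hpl : subtreeAt (p ++ [false]) t = some L := by
          simpa using subtreeAt_append hp false
        have hpr : subtreeAt (p ++ [true]) t = some R := by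
          simpa using subtreeAt_append hp true
        have htn : tval q grp B (.node L R) = tval q grp B L + tval q grp B R := rfl
        by_cases haL : tval q grp B L = 0
        · have hbR : tval q grp B R ≠ 0 := by omega
          obtain ⟨rv, hrv, hrvT⟩ := ihR (p ++ [true]) hpr hbR
          set w := min (tval q grp B R) (K + 1) with hw
          have hmineq : min (tval q grp B (.node L R)) (K + 1) = w := by omega
          have hov : isVarAt q grp K t p w (Sum.inr (p, w)) := by
            rw [isVarAt_node hp]
            refine ⟨by omega, ?_, rfl⟩
            simp only [ggtVals, Finset.mem_image]
            refine ⟨(0, w), Finset.mem_product.mpr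
              ⟨zero_mem_ggtVals q grp K L, ?_⟩, by omega⟩
            rw [hw]
            exact cval_mem q grp B K hq hamo R
          have hC : [(rv, false), ((Sum.inr (p, w) : GGTVar n), true)] ∈
              GGTclauses q grp K t :=
            Or.inl ⟨p, true, w, rv, Sum.inr (p, w), L, R, hp, hrv, hov, rfl⟩
          obtain ⟨lit, hlit, hsl⟩ := hsat _ hC
          simp only [List.mem_cons, List.not_mem_nil, or_false] at hlit
          rw [hmineq]
          rcases hlit with h | h
          · rw [h] at hsl
            rw [satLit] at hsl
            simp [hrvT] at hsl
          · rw [h] at hsl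
            exact ⟨Sum.inr (p, w), hov, hsl⟩
        · by_cases hbR : tval q grp B R = 0
          · obtain ⟨lv, hlv, hlvT⟩ := ihL (p ++ [false]) hpl haL
            set w := min (tval q grp B L) (K + 1) with hw
            have hmineq : min (tval q grp B (.node L R)) (K + 1) = w := by omega
            have hov : isVarAt q grp K t p w (Sum.inr (p, w)) := by
              rw [isVarAt_node hp]
              refine ⟨by omega, ?_, rfl⟩
              simp only [ggtVals, Finset.mem_image]
              refine ⟨(w, 0), Finset.mem_product.mpr
                ⟨?_, zero_mem_ggtVals q grp K R⟩, by omega⟩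
              rw [hw]
              exact cval_mem q grp B K hq hamo L
            have hC : [(lv, false), ((Sum.inr (p, w) : GGTVar n), true)] ∈
                GGTclauses q grp K t :=
              Or.inl ⟨p, false, w, lv, Sum.inr (p, w), L, R, hp, hlv, hov, rfl⟩
            obtain ⟨lit, hlit, hsl⟩ := hsat _ hC
            simp only [List.mem_cons, List.not_mem_nil, or_false] at hlit
            rw [hmineq]
            rcases hlit with h | h
            · rw [h] at hsl
              rw [satLit] at hsl
              simp [hlvT] at hsl
            · rw [h] at hsl
              exact ⟨Sum.inr (p, w), hov, hsl⟩
          · obtain ⟨lv, hlv, hlvT⟩ := ihL (p ++ [false]) hpl haL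
            obtain ⟨rv, hrv, hrvT⟩ := ihR (p ++ [true]) hpr hbR
            set w1 := min (tval q grp B L) (K + 1) with hw1
            set w2 := min (tval q grp B R) (K + 1) with hw2
            have hmineq : min (tval q grp B (.node L R)) (K + 1) =
                min (w1 + w2) (K + 1) := by omega
            have hov : isVarAt q grp K t p (min (w1 + w2) (K + 1))
                (Sum.inr (p, min (w1 + w2) (K + 1))) := by
              rw [isVarAt_node hp]
              refine ⟨by omega, ?_, rfl⟩
              simp only [ggtVals, Finset.mem_image]
              refine ⟨(w1, w2), Finset.mem_product.mpr ⟨?_, ?_⟩, rfl⟩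
              · rw [hw1]; exact cval_mem q grp B K hq hamo L
              · rw [hw2]; exact cval_mem q grp B K hq hamo R
            have hC : [(lv, false), (rv, false),
                ((Sum.inr (p, min (w1 + w2) (K + 1)) : GGTVar n), true)] ∈
                GGTclauses q grp K t :=
              Or.inr (Or.inl ⟨p, w1, w2, lv, rv, Sum.inr (p, min (w1 + w2) (K + 1)),
                L, R, hp, hlv, hrv, hov, rfl⟩)
            obtain ⟨lit, hlit, hsl⟩ := hsat _ hC
            simp only [List.mem_cons, List.not_mem_nil, or_false] at hlit
            rw [hmineq]
            rcases hlit with h | h | h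
            · rw [h] at hsl
              rw [satLit] at hsl
              simp [hlvT] at hsl
            · rw [h] at hsl
              rw [satLit] at hsl
              simp [hrvT] at hsl
            · rw [h] at hsl
              exact ⟨Sum.inr (p, min (w1 + w2) (K + 1)), hov, hsl⟩
    have hne : tval q grp B t ≠ 0 := by omega
    obtain ⟨v, hv, hvT⟩ := main t [] rfl hne
    have hmin : min (tval q grp B t) (K + 1) = K + 1 := by omega
    rw [hmin] at hv
    have hK1mem : K + 1 ∈ ggtVals q grp K t := by
      have := cval_mem q grp B K hq hamo t
      rwa [hmin] at this
    have hC : [(v, false)] ∈ GGTclauses q grp K t :=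
      Or.inr (Or.inr ⟨v, hK1mem, hv, rfl⟩)
    obtain ⟨lit, hlit, hsl⟩ := hsat _ hC
    simp only [List.mem_cons, List.not_mem_nil, or_false] at hlit
    rw [hlit] at hsl
    rw [satLit] at hsl
    simp [hvT] at hsl
  · intro hS
    refine ⟨ggtAssign q grp B K t, fun l => rfl, ?_⟩
    have hsem : ∀ (p : List Bool) (T : PBTree N) (w : ℕ) (v : GGTVar n),
        subtreeAt p t = some T → isVarAt q grp K t p w v →
        ggtAssign q grp B K t v = true → w ≤ min (tval q grp B T) (K + 1) := by
      intro p T w v hp hv hvT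
      cases T with
      | leaf i =>
        rw [isVarAt_leaf hp] at hv
        obtain ⟨hw0, l, hgl, hql, rfl⟩ := hv
        have hBl : B l = true := hvT
        have hg := gval_true q grp B hamo hBl
        have hlK := (hq l).2
        simp only [tval]
        rw [← hgl, hg, hql]
        omega
      | node L R =>
        rw [isVarAt_node hp] at hv
        obtain ⟨hw0, hwm, rfl⟩ := hv
        simp only [ggtAssign] at hvT
        rw [hp] at hvT
        simpa using hvT
    intro C hC
    rcases hC with ⟨p, sdir, w, tv, ov, L, R, hp, htv, hov, rfl⟩ |
      ⟨p, w1, w2, lv, rv, ov, L, R, hp, hlv, hrv, hov, rfl⟩ | ⟨rv, hmem, hrv, rfl⟩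
    · by_cases hb : ggtAssign q grp B K t tv = true
      · have hchild := subtreeAt_append hp sdir
        have hw := hsem _ _ _ _ hchild htv hb
        rw [isVarAt_node hp] at hov
        obtain ⟨hw0, hwm, rfl⟩ := hov
        refine ⟨((Sum.inr (p, w) : GGTVar n), true), by simp, ?_⟩
        have hle : tval q grp B (if sdir then R else L) ≤ tval q grp B (.node L R) := by
          cases sdir <;> simp [tval] <;> omega
        show ggtAssign q grp B K t (Sum.inr (p, w)) = true
        simp only [ggtAssign]
        rw [hp]
        simp only [decide_eq_true_eq]
        omega
      · refine ⟨(tv, false), by simp, ?_⟩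
        show ggtAssign q grp B K t tv = false
        simpa using hb
    · by_cases hbl : ggtAssign q grp B K t lv = true
      · by_cases hbr : ggtAssign q grp B K t rv = true
        · have hpl : subtreeAt (p ++ [false]) t = some L := by
            simpa using subtreeAt_append hp false
          have hpr : subtreeAt (p ++ [true]) t = some R := by
            simpa using subtreeAt_append hp true
          have hw1 := hsem _ _ _ _ hpl hlv hbl
          have hw2 := hsem _ _ _ _ hpr hrv hbr
          rw [isVarAt_node hp] at hov
          obtain ⟨hw0, hwm, rfl⟩ := hov
          refine ⟨((Sum.inr (p, min (w1 + w2) (K + 1)) : GGTVar n), true), by simp, ?_⟩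
          have htn : tval q grp B (.node L R) = tval q grp B L + tval q grp B R := rfl
          show ggtAssign q grp B K t (Sum.inr (p, min (w1 + w2) (K + 1))) = true
          simp only [ggtAssign]
          rw [hp]
          simp only [decide_eq_true_eq]
          omega
        · refine ⟨(rv, false), by simp, ?_⟩
          show ggtAssign q grp B K t rv = false
          simpa using hbr
      · refine ⟨(lv, false), by simp, ?_⟩
        show ggtAssign q grp B K t lv = false
        simpa using hbl
    · refine ⟨(rv, false), by simp, ?_⟩
      show ggtAssign q grp B K t rv = false
      by_contra hb
      rw [Bool.not_eq_false] at hb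
      have := hsem [] t (K + 1) rv rfl hrv hb
      omega
end

section
/- In every tree produced by the RGGT reduction algorithm, for each non-leaf node O with children L and R, and for every pair of intervals [a,b] ∈ L.intervals and [c,d] ∈ R.intervals, there exists an interval [e,f] ∈ O.intervals that contains [a+c, b+d], i.e. with e ≤ a+c and b+d ≤ f. -/
/-- `u` and `v` are adjacent values of the finite set `S` (`u < v` with no value of
`S` strictly in between). -/
def adjacentIn (S : Finset ℕ) (u v : ℕ) : Prop :=
  u ∈ S ∧ v ∈ S ∧ u < v ∧ ∀ w ∈ S, ¬ (u < w ∧ w < v)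

/-- The same-interval relation of the root node: its intervals are
`[0, max(vals∖{K+1})]` and `[K+1, ∞]`, so two values lie in a common interval iff
they are both `≤ K` or both `> K`. -/
def rootSameRel (K : ℕ) : ℕ → ℕ → Prop := fun a b => (a ≤ K ↔ b ≤ K)

/-- The same-interval relation of a child node `V` with value set `myVals`, given
the same-interval relation `parentSame` of its parent and the value set `sibVals`
of its sibling `W`: two values `b, c` of `V` lie in a common interval iff every two
adjacent values `u < v` of `V` lying between them satisfy, for every value `w` of
the sibling, that `w+u` and `w+v` (capped at `K+1`) lie in a common interval of
the parent (this is the result of the merging loop of `makeChildIntervals`). -/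
def childSame (K : ℕ) (parentSame : ℕ → ℕ → Prop) (sibVals myVals : Finset ℕ)
    (b c : ℕ) : Prop :=
  b ∈ myVals ∧ c ∈ myVals ∧
  ∀ u v : ℕ, adjacentIn myVals u v → min b c ≤ u → v ≤ max b c →
    ∀ w ∈ sibVals, parentSame (min (w + u) (K + 1)) (min (w + v) (K + 1))

/-- The same-interval relation of the node of the tree at the given path, computed
top-down from the root relation as in `makeChildIntervals`. -/
def sameAt {n N : ℕ} (q : Fin n → ℕ) (grp : Fin n → Fin N) (K : ℕ) :
    PBTree N → (ℕ → ℕ → Prop) → List Bool → ℕ → ℕ → Prop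
  | _, same, [] => same
  | .leaf _, _, _ :: _ => fun _ _ => False
  | .node L R, same, false :: p =>
      sameAt q grp K L
        (childSame K same (ggtVals q grp K R) (ggtVals q grp K L)) p
  | .node L R, same, true :: p =>
      sameAt q grp K R
        (childSame K same (ggtVals q grp K L) (ggtVals q grp K R)) p

/-- `[a, b]` is one of the intervals of a node with value set `S` and same-interval
relation `same`: a maximal block of values of `S` lying in a common interval.
(The interval `[K+1, K+1]` of values represents the unbounded interval `[K+1, ∞]`.) -/
def isIntervalOf (S : Finset ℕ) (same : ℕ → ℕ → Prop) (a b : ℕ) : Prop :=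
  a ∈ S ∧ b ∈ S ∧ a ≤ b ∧ same a b ∧
  (∀ c ∈ S, c < a → ¬ same c a) ∧ (∀ c ∈ S, b < c → ¬ same b c)


section Aux

variable {n N : ℕ} (q : Fin n → ℕ) (grp : Fin n → Fin N) (K : ℕ)

lemma childSame_refl (P : ℕ → ℕ → Prop) (sib my : Finset ℕ) {x : ℕ} (hx : x ∈ my) :
    childSame K P sib my x x := by
  refine ⟨hx, hx, ?_⟩
  intro u v hadj h1 h2 w hw
  have := hadj.2.2.1
  exact absurd rfl (by omega : ¬ (0 = 0))

lemma childSame_symm (P : ℕ → ℕ → Prop) (sib my : Finset ℕ) {x y : ℕ}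
    (h : childSame K P sib my x y) : childSame K P sib my y x := by
  obtain ⟨hx, hy, h⟩ := h
  exact ⟨hy, hx, by rwa [min_comm, max_comm]⟩

lemma childSame_trans (P : ℕ → ℕ → Prop) (sib my : Finset ℕ) {x y z : ℕ}
    (h1 : childSame K P sib my x y) (h2 : childSame K P sib my y z) :
    childSame K P sib my x z := by
  obtain ⟨hx, hy, h1⟩ := h1
  obtain ⟨hy', hz, h2⟩ := h2
  refine ⟨hx, hz, ?_⟩
  intro u v hadj hu hv w hw
  have hyuv : ¬ (u < y ∧ y < v) := hadj.2.2.2 y hy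
  have huv := hadj.2.2.1
  rcases le_or_gt v y with hvy | hyv
  · rcases le_total x z with hxz | hzx
    · exact h1 u v hadj (by omega) (by omega) w hw
    · exact h2 u v hadj (by omega) (by omega) w hw
  · have hyu : y ≤ u := by omega
    rcases le_total x z with hxz | hzx
    · exact h2 u v hadj (by omega) (by omega) w hw
    · exact h1 u v hadj (by omega) (by omega) w hw

/-- chaining a childSame pair through adjacent steps gives parent sameness. -/
lemma childSame_chain (P : ℕ → ℕ → Prop)
    (htrans : ∀ x y z, P x y → P y z → P x z)
    (sib my : Finset ℕ)
    (hrefl : ∀ w ∈ sib, ∀ u ∈ my, P (min (w + u) (K + 1)) (min (w + u) (K + 1))) :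
    ∀ m b c, c - b ≤ m → b ≤ c → childSame K P sib my b c →
      ∀ w ∈ sib, P (min (w + b) (K + 1)) (min (w + c) (K + 1)) := by
  intro m
  induction m with
  | zero =>
    intro b c hm hbc h w hw
    have : b = c := by omega
    subst this
    exact hrefl w hw b h.1
  | succ m ih =>
    intro b c hm hbc h w hw
    rcases eq_or_lt_of_le hbc with heq | hlt
    · subst heq; exact hrefl w hw b h.1
    · obtain ⟨hb, hc, hcond⟩ := h
      set T := my.filter (fun x => b < x ∧ x ≤ c) with hT
      have hcT : c ∈ T := by simp [hT, hc, hlt]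
      have hne : T.Nonempty := ⟨c, hcT⟩
      set v := T.min' hne with hv
      have hvT : v ∈ T := T.min'_mem hne
      have hvmy : v ∈ my := (Finset.mem_filter.mp hvT).1
      have hbv : b < v := (Finset.mem_filter.mp hvT).2.1
      have hvc : v ≤ c := (Finset.mem_filter.mp hvT).2.2
      have hadj : adjacentIn my b v := by
        refine ⟨hb, hvmy, hbv, ?_⟩
        rintro z hz ⟨h1, h2⟩
        have : z ∈ T := by simp [hT, hz, h1]; omega
        exact absurd (T.min'_le z this) (by omega)
      have hstep : P (min (w + b) (K + 1)) (min (w + v) (K + 1)) :=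
        hcond b v hadj (by omega) (by omega) w hw
      have hvcsame : childSame K P sib my v c := by
        refine ⟨hvmy, hc, ?_⟩
        intro u' v' hadj' hu' hv' w' hw'
        exact hcond u' v' hadj' (by omega) (by omega) w' hw'
      have hrest : P (min (w + v) (K + 1)) (min (w + c) (K + 1)) :=
        ih v c (by omega) hvc hvcsame w hw
      exact htrans _ _ _ hstep hrest

lemma sameAt_nil (t : PBTree N) (same : ℕ → ℕ → Prop) :
    sameAt q grp K t same [] = same := by
  cases t <;> rfl

lemma sameAt_append :
    ∀ (p p' : List Bool) (t t' : PBTree N) (same : ℕ → ℕ → Prop),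
      subtreeAt p t = some t' →
      sameAt q grp K t same (p ++ p') = sameAt q grp K t' (sameAt q grp K t same p) p' := by
  intro p
  induction p with
  | nil =>
    intro p' t t' same h
    simp only [subtreeAt, Option.some.injEq] at h
    subst h
    rw [sameAt_nil]; rfl
  | cons b p ih =>
    intro p' t t' same h
    cases t with
    | leaf i => simp [subtreeAt] at h
    | node A B =>
      cases b with
      | false => exact ih p' A t' _ h
      | true => exact ih p' B t' _ h

/-- Niceness: reflexive on V, symmetric, transitive. -/
def NiceRel (S : ℕ → ℕ → Prop) (V : Finset ℕ) : Prop :=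
  (∀ x ∈ V, S x x) ∧ (∀ x y, S x y → S y x) ∧ (∀ x y z, S x y → S y z → S x z)

lemma nice_childSame (P : ℕ → ℕ → Prop) (sib my : Finset ℕ) :
    NiceRel (childSame K P sib my) my :=
  ⟨fun _ hx => childSame_refl K P sib my hx,
   fun _ _ h => childSame_symm K P sib my h,
   fun _ _ _ h1 h2 => childSame_trans K P sib my h1 h2⟩

lemma nice_sameAt :
    ∀ (p : List Bool) (t t' : PBTree N) (same : ℕ → ℕ → Prop),
      subtreeAt p t = some t' →
      NiceRel same (ggtVals q grp K t) →
      NiceRel (sameAt q grp K t same p) (ggtVals q grp K t') := by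
  intro p
  induction p with
  | nil =>
    intro t t' same h hn
    simp only [subtreeAt, Option.some.injEq] at h
    subst h
    rw [sameAt_nil]
    exact hn
  | cons b p ih =>
    intro t t' same h hn
    cases t with
    | leaf i => simp [subtreeAt] at h
    | node A B =>
      cases b with
      | false => exact ih A t' _ h (nice_childSame K _ _ _)
      | true => exact ih B t' _ h (nice_childSame K _ _ _)

end Aux

/-!
STATEMENT 18 (Property `rggt-incl`).  In every tree produced by the RGGT reduction
algorithm (a binary tree, one leaf per group of the partition, with `vals` the
capped attainable sums and `intervals` computed by `makeChildIntervals` from the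
root intervals `[0, max(vals∖{K+1})]` and `[K+1, ∞]`), for each non-leaf node `O`
with children `L` and `R` and every pair of intervals `[a,b]` of `L` and `[c,d]` of
`R`, there exists an interval `[e,f]` of `O` containing `[a+c, b+d]`, i.e. with
`e ≤ a+c` and `b+d ≤ f` (where the value `K+1` as an upper endpoint stands for `∞`,
so the required bound on `f` is `min (b+d) (K+1) ≤ f`).
-/
theorem stmt18 {n N : ℕ} (q : Fin n → ℕ) (K : ℕ) (hq : ∀ l, 1 ≤ q l)
    (grp : Fin n → Fin N)
    (t : PBTree N)
    (ht : t.leavesOf.Nodup ∧ ∀ i : Fin N, i ∈ t.leavesOf)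
    (p : List Bool) (L R : PBTree N)
    (hsub : subtreeAt p t = some (.node L R))
    (a b c d : ℕ)
    (hL : isIntervalOf (ggtVals q grp K L)
      (sameAt q grp K t (rootSameRel K) (p ++ [false])) a b)
    (hR : isIntervalOf (ggtVals q grp K R)
      (sameAt q grp K t (rootSameRel K) (p ++ [true])) c d) :
    ∃ e f : ℕ,
      isIntervalOf (ggtVals q grp K (.node L R))
        (sameAt q grp K t (rootSameRel K) p) e f ∧
      e ≤ a + c ∧ min (b + d) (K + 1) ≤ f := by
  classical
  set S := sameAt q grp K t (rootSameRel K) p with hS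
  set VL := ggtVals q grp K L with hVL
  set VR := ggtVals q grp K R with hVR
  set VO := ggtVals q grp K (.node L R) with hVO
  have hroot_nice : NiceRel (rootSameRel K) (ggtVals q grp K t) :=
    ⟨fun x _ => Iff.rfl, fun x y h => h.symm, fun x y z h1 h2 => h1.trans h2⟩
  have hSnice : NiceRel S VO := nice_sameAt q grp K p t _ _ hsub hroot_nice
  obtain ⟨hSrefl, hSsymm, hStrans⟩ := hSnice
  -- rewrite the child relations
  have hLrel : sameAt q grp K t (rootSameRel K) (p ++ [false]) =
      childSame K S VR VL := by
    rw [sameAt_append q grp K p [false] t _ _ hsub]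
    exact sameAt_nil q grp K L _
  have hRrel : sameAt q grp K t (rootSameRel K) (p ++ [true]) =
      childSame K S VL VR := by
    rw [sameAt_append q grp K p [true] t _ _ hsub]
    exact sameAt_nil q grp K R _
  rw [hLrel] at hL
  rw [hRrel] at hR
  obtain ⟨haL, hbL, hab, habS, _, _⟩ := hL
  obtain ⟨hcR, hdR, hcd, hcdS, _, _⟩ := hR
  -- membership of capped sums in VO
  have hmemO : ∀ u ∈ VL, ∀ w ∈ VR, min (u + w) (K + 1) ∈ VO := by
    intro u hu w hw
    simp only [hVO, ggtVals, Finset.mem_image]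
    exact ⟨(u, w), Finset.mem_product.mpr ⟨hu, hw⟩, rfl⟩
  have hreflL : ∀ w ∈ VR, ∀ u ∈ VL, S (min (w + u) (K + 1)) (min (w + u) (K + 1)) := by
    intro w hw u hu
    exact hSrefl _ (by rw [Nat.add_comm]; exact hmemO u hu w hw)
  have hreflR : ∀ w ∈ VL, ∀ u ∈ VR, S (min (w + u) (K + 1)) (min (w + u) (K + 1)) := by
    intro w hw u hu
    exact hSrefl _ (hmemO w hw u hu)
  -- the key chain steps
  have step1 : S (min (c + a) (K + 1)) (min (c + b) (K + 1)) :=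
    childSame_chain K S hStrans VR VL hreflL (b - a) a b le_rfl hab habS c hcR
  have step2 : S (min (b + c) (K + 1)) (min (b + d) (K + 1)) :=
    childSame_chain K S hStrans VL VR hreflR (d - c) c d le_rfl hcd hcdS b hbL
  have hkey : S (min (a + c) (K + 1)) (min (b + d) (K + 1)) := by
    rw [Nat.add_comm a c]
    refine hStrans _ _ _ step1 ?_
    rwa [Nat.add_comm c b]
  set x := min (a + c) (K + 1) with hx
  set y := min (b + d) (K + 1) with hy
  have hxO : x ∈ VO := hmemO a haL c hcR
  have hyO : y ∈ VO := hmemO b hbL d hdR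
  -- the equivalence class of x within VO
  set A := VO.filter (fun z => S x z) with hA
  have hxA : x ∈ A := Finset.mem_filter.mpr ⟨hxO, hSrefl x hxO⟩
  have hne : A.Nonempty := ⟨x, hxA⟩
  refine ⟨A.min' hne, A.max' hne, ?_, ?_, ?_⟩
  · have hminA := A.min'_mem hne
    have hmaxA := A.max'_mem hne
    obtain ⟨hminO, hminS⟩ := Finset.mem_filter.mp hminA
    obtain ⟨hmaxO, hmaxS⟩ := Finset.mem_filter.mp hmaxA
    refine ⟨hminO, hmaxO, A.min'_le _ (A.max'_mem hne) |>.trans le_rfl, ?_, ?_, ?_⟩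
    · exact hStrans _ _ _ (hSsymm _ _ hminS) hmaxS
    · intro z hz hlt hsz
      have : z ∈ A := Finset.mem_filter.mpr ⟨hz, hStrans _ _ _ hminS (hSsymm _ _ hsz)⟩
      exact absurd (A.min'_le z this) (by omega)
    · intro z hz hlt hsz
      have : z ∈ A := Finset.mem_filter.mpr ⟨hz, hStrans _ _ _ hmaxS hsz⟩
      exact absurd (A.le_max' z this) (by omega)
  · exact le_trans (A.min'_le x hxA) (min_le_left _ _)
  · exact A.le_max' y (Finset.mem_filter.mpr ⟨hyO, hkey⟩)
end
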